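/- Let G be an undirected graph on n≥3 vertices. If for every symmetric positive definite n×n matrix A the thresholded matrix A_G is positive definite, then G is a disjoint union of complete components. -/

import Mathlib

/-!
If some component were not complete, it would contain an induced path `i ~ k ~ j` with `i`, `j`
non-adjacent. The positive definite matrix `½ I + w wᵀ`, with `w k = 2` and `w = 1` elsewhere,
thresholds to a matrix whose principal block on `(i, j, k)` has quadratic form `-½` at
`(1, 1, -1)`, so the thresholded matrix is not positive definite.
-/

def threshold {n : ℕ} (G : SimpleGraph (Fin n)) [DecidableRel G.Adj]
    (A : Matrix (Fin n) (Fin n) ℝ) : Matrix (Fin n) (Fin n) ℝ :=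
  Matrix.of fun i j => if i = j ∨ G.Adj i j then A i j else 0

open Matrix

theorem SimpleGraph.adj_of_reachable_of_ne {V : Type*} {G : SimpleGraph V}
    (htrans : ∀ i k j, G.Adj i k → G.Adj k j → i ≠ j → G.Adj i j) {i j : V}
    (hreach : G.Reachable i j) (hij : i ≠ j) : G.Adj i j := by
  obtain ⟨w⟩ := hreach
  induction w with
  | nil => exact absurd rfl hij
  | @cons i k j hik _ ih =>
    obtain rfl | hkj := eq_or_ne k j
    · exact hik
    · exact htrans i k j hik (ih hkj) hij

noncomputable def pathWitness {n : ℕ} (k : Fin n) : Matrix (Fin n) (Fin n) ℝ :=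
  (1 / 2 : ℝ) • 1 + vecMulVec (fun l => if l = k then 2 else 1) (fun l => if l = k then 2 else 1)

theorem pathWitness_isSymm {n : ℕ} (k : Fin n) : (pathWitness k).IsSymm := by
  simp [pathWitness, IsSymm, transpose_add, transpose_smul, transpose_vecMulVec]

theorem pathWitness_posDef {n : ℕ} (k : Fin n) : (pathWitness k).PosDef :=
  (PosDef.one.smul (by norm_num)).add_posSemidef (posSemidef_vecMulVec_self_star _)

noncomputable def pathBlock : Matrix (Fin 3) (Fin 3) ℝ :=
  !![3 / 2, 0, 2; 0, 3 / 2, 2; 2, 2, 9 / 2]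

theorem not_posDef_pathBlock : ¬ pathBlock.PosDef := by
  intro hM
  have hneg := (posDef_iff_dotProduct_mulVec.mp hM).2 (x := ![1, 1, -1]) (by simp)
  simp [pathBlock, dotProduct, mulVec, Fin.sum_univ_three] at hneg
  norm_num at hneg

theorem submatrix_threshold_pathWitness {n : ℕ} {G : SimpleGraph (Fin n)} [DecidableRel G.Adj]
    {i j k : Fin n} (hik : G.Adj i k) (hkj : G.Adj k j) (hij : i ≠ j) (hnij : ¬ G.Adj i j) :
    (threshold G (pathWitness k)).submatrix ![i, j, k] ![i, j, k] = pathBlock := by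
  ext a b
  fin_cases a <;> fin_cases b <;>
    simp [threshold, pathWitness, pathBlock, one_apply, vecMulVec_apply, G.adj_comm j i, hij,
      hij.symm, hnij, hik, hik.symm, hik.ne, hik.ne.symm, hkj, hkj.symm, hkj.ne, hkj.ne.symm] <;>
    norm_num

theorem adj_of_threshold_posDef {n : ℕ} {G : SimpleGraph (Fin n)} [DecidableRel G.Adj]
    (h : ∀ A : Matrix (Fin n) (Fin n) ℝ, A.IsSymm → A.PosDef → (threshold G A).PosDef)
    {i j k : Fin n} (hik : G.Adj i k) (hkj : G.Adj k j) (hij : i ≠ j) : G.Adj i j := by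
  by_contra hnij
  have hinj : Function.Injective ![i, j, k] := by
    intro a b
    fin_cases a <;> fin_cases b <;>
      simp [hij, hij.symm, hik.ne, hik.ne.symm, hkj.ne, hkj.ne.symm]
  have hsub := (h _ (pathWitness_isSymm k) (pathWitness_posDef k)).submatrix hinj
  rw [submatrix_threshold_pathWitness hik hkj hij hnij] at hsub
  exact not_posDef_pathBlock hsub

theorem stmt_2 {n : ℕ} (G : SimpleGraph (Fin n)) [DecidableRel G.Adj]
    (h : ∀ A : Matrix (Fin n) (Fin n) ℝ, A.IsSymm → A.PosDef → (threshold G A).PosDef) :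
    ∀ i j : Fin n, i ≠ j → G.Reachable i j → G.Adj i j :=
  fun _ _ hij hreach =>
    G.adj_of_reachable_of_ne (fun _ _ _ hik hkj hij => adj_of_threshold_posDef h hik hkj hij)
      hreach hij
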